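/- Assume P = Q, fix λ ∈ [0, 1), let α_1,…,α_n ≥ 0, and suppose the process (S_k − α_k)_{k=1}^n is a.s. non-decreasing in k. Then V_0^{CVaR}, the infimum of E[M_0] over all P-supermartingales (M_k)_{k=0}^n satisfying CVaR_λ( (S_k − M_k)^+ ) ≤ α_k for every k ∈ {1,…,n}, equals E[S_n] − α_n. -/

import Mathlib

open MeasureTheory Filter
open scoped MeasureTheory

/-- A supermartingale (under measure `μ`) on the discrete time interval `{a,…,b}`. -/
def IsSupermartingaleOn {Ω : Type*} {m0 : MeasurableSpace Ω}
    (𝓕 : MeasureTheory.Filtration ℕ m0) (μ : Measure Ω)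
    (M : ℕ → Ω → ℝ) (a b : ℕ) : Prop :=
  (∀ k, a ≤ k → k ≤ b → StronglyMeasurable[𝓕 k] (M k)) ∧
  (∀ k, a ≤ k → k ≤ b → Integrable (M k) μ) ∧
  (∀ k, a ≤ k → k < b → (μ[M (k + 1)|𝓕 k]) ≤ᵐ[μ] M k)

/-- The conditional Value at Risk of a loss `X` at level `lam`:
`CVaR_lam(X) = inf_z { (1-lam)⁻¹ E[(X-z)⁺] + z }`. -/
noncomputable def CVaR {Ω : Type*} {m0 : MeasurableSpace Ω} (P : Measure Ω)
    (lam : ℝ) (X : Ω → ℝ) : ℝ :=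
  sInf {y : ℝ | ∃ z : ℝ, y = (1 - lam)⁻¹ * (∫ ω, max (X ω - z) 0 ∂P) + z}

/-!
Since CVaR dominates the mean and supermartingales have non-increasing means, any admissible `M`
satisfies `E[M_0] ≥ E[M_n] ≥ E[S_n] - E[(S_n - M_n)⁺] ≥ E[S_n] - α_n`.
Conversely the martingale `M_k = E[S_n | ℱ_k] - α_n` attains this value: conditioning
`S_k - α_k ≤ S_n - α_n` on `ℱ_k` gives `(S_k - M_k)⁺ ≤ α_k` a.s., so its CVaR is at most `α_k`.
-/

section CVaR

variable {Ω : Type*} {m0 : MeasurableSpace Ω} {P : Measure Ω} [IsProbabilityMeasure P]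
  {lam : ℝ} {X : Ω → ℝ}

lemma integral_le_CVaR_objective (hlam0 : 0 ≤ lam) (hlam1 : lam < 1) (hX : Integrable X P)
    (z : ℝ) : ∫ ω, X ω ∂P ≤ (1 - lam)⁻¹ * (∫ ω, max (X ω - z) 0 ∂P) + z := by
  have hXz : Integrable (fun ω => X ω - z) P := hX.sub (integrable_const z)
  have hinv : 1 ≤ (1 - lam)⁻¹ := one_le_inv_iff₀.mpr ⟨by linarith, by linarith⟩
  have hpos : 0 ≤ ∫ ω, max (X ω - z) 0 ∂P := integral_nonneg fun ω => le_max_right _ _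
  calc ∫ ω, X ω ∂P = ∫ ω, (X ω - z) ∂P + z := by
        rw [integral_sub hX (integrable_const z)]; simp
    _ ≤ ∫ ω, max (X ω - z) 0 ∂P + z :=
        add_le_add_left (integral_mono hXz hXz.pos_part fun ω => le_max_left _ _) z
    _ ≤ (1 - lam)⁻¹ * (∫ ω, max (X ω - z) 0 ∂P) + z :=
        add_le_add_left (le_mul_of_one_le_left hpos hinv) z

lemma integral_le_CVaR (hlam0 : 0 ≤ lam) (hlam1 : lam < 1) (hX : Integrable X P) :
    ∫ ω, X ω ∂P ≤ CVaR P lam X :=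
  le_csInf ⟨_, 0, rfl⟩ fun _ ⟨z, hz⟩ => hz ▸ integral_le_CVaR_objective hlam0 hlam1 hX z

lemma CVaR_le_of_ae_le (hlam0 : 0 ≤ lam) (hlam1 : lam < 1) (hX : Integrable X P) {c : ℝ}
    (hle : ∀ᵐ ω ∂P, X ω ≤ c) : CVaR P lam X ≤ c := by
  have hzero : ∫ ω, max (X ω - c) 0 ∂P = 0 :=
    integral_eq_zero_of_ae (by filter_upwards [hle] with ω h; simpa using h)
  refine csInf_le ⟨∫ ω, X ω ∂P, fun _ ⟨z, hz⟩ => hz ▸ ?_⟩ ⟨c, by rw [hzero]; ring⟩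
  exact integral_le_CVaR_objective hlam0 hlam1 hX z

lemma integral_sub_le_of_CVaR_shortfall_le (hlam0 : 0 ≤ lam) (hlam1 : lam < 1)
    (hX : Integrable X P) {Y : Ω → ℝ} (hY : Integrable Y P) {c : ℝ}
    (hc : CVaR P lam (fun ω => max (X ω - Y ω) 0) ≤ c) :
    ∫ ω, X ω ∂P - c ≤ ∫ ω, Y ω ∂P := by
  have hXY : Integrable (fun ω => X ω - Y ω) P := hX.sub hY
  have hmean : ∫ ω, max (X ω - Y ω) 0 ∂P ≤ c :=
    (integral_le_CVaR hlam0 hlam1 hXY.pos_part).trans hc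
  have hshort : ∫ ω, (X ω - Y ω) ∂P ≤ ∫ ω, max (X ω - Y ω) 0 ∂P :=
    integral_mono hXY hXY.pos_part fun ω => le_max_left _ _
  rw [integral_sub hX hY] at hshort
  linarith

end CVaR

section Supermartingale

variable {Ω : Type*} {m0 : MeasurableSpace Ω} {𝓕 : Filtration ℕ m0} {μ : Measure Ω}
  {M : ℕ → Ω → ℝ} {a b : ℕ}

lemma IsSupermartingaleOn.integral_le [IsFiniteMeasure μ] (hM : IsSupermartingaleOn 𝓕 μ M a b)
    {j k : ℕ} (haj : a ≤ j) (hjk : j ≤ k) (hkb : k ≤ b) :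
    ∫ ω, M k ω ∂μ ≤ ∫ ω, M j ω ∂μ := by
  induction k, hjk using Nat.le_induction with
  | base => exact le_rfl
  | succ k hjk ih =>
    have hak : a ≤ k := haj.trans hjk
    calc ∫ ω, M (k + 1) ω ∂μ = ∫ ω, (μ[M (k + 1)|𝓕 k]) ω ∂μ := (integral_condExp (𝓕.le k)).symm
      _ ≤ ∫ ω, M k ω ∂μ :=
        integral_mono_ae integrable_condExp (hM.2.1 k hak (by omega)) (hM.2.2 k hak hkb)
      _ ≤ ∫ ω, M j ω ∂μ := ih (by omega)

lemma Supermartingale.isSupermartingaleOn (hM : Supermartingale M 𝓕 μ) (a b : ℕ) :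
    IsSupermartingaleOn 𝓕 μ M a b :=
  ⟨fun k _ _ => hM.stronglyMeasurable k, fun k _ _ => hM.integrable k,
    fun _ _ _ => hM.condExp_ae_le (Nat.le_succ _)⟩

end Supermartingale

section CondExp

variable {Ω : Type*} {m m0 : MeasurableSpace Ω} {μ : Measure Ω} {f g : Ω → ℝ}

lemma ae_le_condExp_of_ae_le (hm : m ≤ m0) [SigmaFinite (μ.trim hm)]
    (hg : StronglyMeasurable[m] g) (hgi : Integrable g μ) (hfi : Integrable f μ)
    (hgf : g ≤ᵐ[μ] f) : g ≤ᵐ[μ] μ[f|m] := by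
  have h := condExp_mono (m := m) hgi hfi hgf
  rwa [condExp_of_stronglyMeasurable hm hg hgi] at h

lemma ae_shortfall_condExp_sub_le [IsFiniteMeasure μ] (hm : m ≤ m0)
    (hg : StronglyMeasurable[m] g) (hgi : Integrable g μ) (hfi : Integrable f μ) {a b : ℝ}
    (ha : 0 ≤ a) (hgf : ∀ᵐ ω ∂μ, g ω - a ≤ f ω - b) :
    ∀ᵐ ω ∂μ, max (g ω - (μ[f|m] ω - b)) 0 ≤ a := by
  have hle : (fun ω => g ω + (b - a)) ≤ᵐ[μ] μ[f|m] :=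
    ae_le_condExp_of_ae_le hm (hg.add_const _) (hgi.add (integrable_const _)) hfi
      (by filter_upwards [hgf] with ω h; linarith)
  filter_upwards [hle] with ω h
  exact max_le (by linarith [show g ω + (b - a) ≤ μ[f|m] ω from h]) ha

end CondExp

theorem stmt_19_general
    {Ω : Type*} {m0 : MeasurableSpace Ω} (P : Measure Ω) [IsProbabilityMeasure P]
    (𝓕 : Filtration ℕ m0) (n : ℕ) (hn : 1 ≤ n)
    (S : ℕ → Ω → ℝ) (hS : Adapted 𝓕 S) (hSint : ∀ k, Integrable (S k) P)
    (α : ℕ → ℝ) (hα : ∀ k, 1 ≤ k → k ≤ n → 0 ≤ α k)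
    (hmono : ∀ᵐ ω ∂P, ∀ j k, 1 ≤ j → j ≤ k → k ≤ n →
      S j ω - α j ≤ S k ω - α k)
    (lam : ℝ) (hlam0 : 0 ≤ lam) (hlam1 : lam < 1) :
    sInf {x : ℝ | ∃ M : ℕ → Ω → ℝ, IsSupermartingaleOn 𝓕 P M 0 n ∧
        (∀ k, 1 ≤ k → k ≤ n →
          CVaR P lam (fun ω => max (S k ω - M k ω) 0) ≤ α k) ∧
        x = ∫ ω, M 0 ω ∂P}
      = (∫ ω, S n ω ∂P) - α n := by
  set A := {x : ℝ | ∃ M : ℕ → Ω → ℝ, IsSupermartingaleOn 𝓕 P M 0 n ∧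
    (∀ k, 1 ≤ k → k ≤ n → CVaR P lam (fun ω => max (S k ω - M k ω) 0) ≤ α k) ∧
    x = ∫ ω, M 0 ω ∂P}
  have hlb : ∀ x ∈ A, ∫ ω, S n ω ∂P - α n ≤ x := by
    rintro x ⟨M, hM, hCVaR, rfl⟩
    exact (integral_sub_le_of_CVaR_shortfall_le hlam0 hlam1 (hSint n) (hM.2.1 n n.zero_le le_rfl)
      (hCVaR n hn le_rfl)).trans (hM.integral_le le_rfl n.zero_le le_rfl)
  have hmem : ∫ ω, S n ω ∂P - α n ∈ A := by
    refine ⟨fun k ω => (P[S n|𝓕 k]) ω - α n, Supermartingale.isSupermartingaleOn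
      ((martingale_condExp (S n) 𝓕 P).sub (martingale_const 𝓕 P (α n))).supermartingale 0 n,
      fun k hk1 hkn => ?_, ?_⟩
    · refine CVaR_le_of_ae_le hlam0 hlam1
        ((hSint k).sub (integrable_condExp.sub (integrable_const _))).pos_part ?_
      exact ae_shortfall_condExp_sub_le (𝓕.le k) (hS k).stronglyMeasurable (hSint k) (hSint n)
        (hα k hk1 hkn) (by filter_upwards [hmono] with ω h using h k n hk1 hkn le_rfl)
    · rw [integral_sub integrable_condExp (integrable_const _), integral_condExp (𝓕.le 0)]
      simp
  exact le_antisymm (csInf_le ⟨_, hlb⟩ hmem) (le_csInf ⟨_, hmem⟩ hlb)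

/-- Proposition 5.3: if `(S_k - α_k)_{k=1}^n` is a.s. non-decreasing, then
`V₀^CVaR`, the minimal cost of a `P`-supermartingale satisfying
`CVaR_λ((S_k - M_k)⁺) ≤ α_k` for all `k ∈ {1,…,n}`, equals `E[S_n] - α_n`. -/
theorem stmt_19
    {Ω : Type*} {m0 : MeasurableSpace Ω} (P : Measure Ω) [IsProbabilityMeasure P]
    (𝓕 : Filtration ℕ m0) (n : ℕ) (hn : 1 ≤ n)
    (htriv : ∀ s : Set Ω, MeasurableSet[𝓕 0] s → P s = 0 ∨ P s = 1)
    (S : ℕ → Ω → ℝ) (hS : Adapted 𝓕 S) (hSint : ∀ k, Integrable (S k) P)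
    (α : ℕ → ℝ) (hα : ∀ k, 1 ≤ k → k ≤ n → 0 ≤ α k)
    (hmono : ∀ᵐ ω ∂P, ∀ j k, 1 ≤ j → j ≤ k → k ≤ n →
      S j ω - α j ≤ S k ω - α k)
    (lam : ℝ) (hlam0 : 0 ≤ lam) (hlam1 : lam < 1) :
    sInf {x : ℝ | ∃ M : ℕ → Ω → ℝ, IsSupermartingaleOn 𝓕 P M 0 n ∧
        (∀ k, 1 ≤ k → k ≤ n →
          CVaR P lam (fun ω => max (S k ω - M k ω) 0) ≤ α k) ∧
        x = ∫ ω, M 0 ω ∂P}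
      = (∫ ω, S n ω ∂P) - α n :=
  stmt_19_general P 𝓕 n hn S hS hSint α hα hmono lam hlam0 hlam1
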